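/- arXiv:1507.08536 — 3 statements merged into one kernel-verified Lean document; each statement's English description precedes it below -/
import Mathlib

section
/- Let H be the union of finitely many axis-parallel unit squares in ℝ², i.e., H = ⋃_{i=1}^n H_i where each H_i is a translate of [0,1]² and n ≥ 1. Then the perimeter of H is at most 4 times the area of H, i.e., 𝓗¹(frontier H) ≤ 4 · vol(H). -/
/-!
Slice `H` by horizontal lines. Away from the finitely many heights of horizontal edges, the slice
at height `y` is a union of closed unit intervals, and the points where that line meets
`frontier H` are boundary points of the slice. Each of them is the left end of a unit interval
`(a, a + 1)` inside the slice or the right end of one `(a - 1, a)`; intervals of the same kind are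
disjoint, so there are at most `2 · |slice|` such points. Integrating over `y` bounds the length
of the part of `frontier H` on vertical lines by `2 · vol H`; swapping the coordinates does the
same for horizontal lines, and `frontier H` lies on the lines through the edges.
-/

open MeasureTheory Set
open scoped ENNReal Topology

def unitSquare : Set (EuclideanSpace ℝ (Fin 2)) :=
  {x | ∀ i, x i ∈ Set.Icc (0 : ℝ) 1}

def IsUnionOfUnitIntervals (K : Set ℝ) : Prop :=
  ∀ x ∈ K, ∃ t, x ∈ Icc t (t + 1) ∧ Icc t (t + 1) ⊆ K

theorem card_le_volume_of_unit_Ioo_subset {K : Set ℝ} {F : Finset ℝ}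
    (hK : ∀ a ∈ F, Ioo a (a + 1) ⊆ K) (hF : ∀ a ∈ F, ∀ b ∈ F, b ∉ Ioo a (a + 1)) :
    (F.card : ℝ≥0∞) ≤ volume K := by
  have hdisj : (F : Set ℝ).PairwiseDisjoint fun a => Ioo a (a + 1) := by
    intro a ha b hb hab
    wlog h : a < b generalizing a b
    · exact (this hb ha hab.symm (hab.lt_or_gt.resolve_left h)).symm
    have hsep : a + 1 ≤ b := by
      by_contra! h'
      exact hF a ha b hb ⟨h, h'⟩
    exact Set.disjoint_left.2 fun x hx hx' => by linarith [hx.2, hx'.1]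
  calc (F.card : ℝ≥0∞) = ∑ a ∈ F, volume (Ioo a (a + 1)) := by simp [Real.volume_Ioo]
    _ = volume (⋃ a ∈ F, Ioo a (a + 1)) :=
      (measure_biUnion_finset hdisj fun _ _ => measurableSet_Ioo).symm
    _ ≤ volume K := measure_mono (iUnion₂_subset hK)

namespace IsUnionOfUnitIntervals

variable {K : Set ℝ}

theorem Ioo_subset_or_Ioo_subset (hK : IsUnionOfUnitIntervals K) {a : ℝ} (ha : a ∈ K)
    (ha' : a ∉ interior K) :
    Ioo a (a + 1) ⊆ K ∨ Ioo (a - 1) a ⊆ K := by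
  obtain ⟨t, hat, htK⟩ := hK a ha
  have hedge : a ∈ Icc t (t + 1) \ Ioo t (t + 1) :=
    ⟨hat, fun h => ha' (interior_maximal (Ioo_subset_Icc_self.trans htK) isOpen_Ioo h)⟩
  rw [Icc_sdiff_Ioo_same (by linarith)] at hedge
  rcases hedge with rfl | rfl
  · exact Or.inl (Ioo_subset_Icc_self.trans htK)
  · exact Or.inr (by rw [add_sub_cancel_right]; exact Ioo_subset_Icc_self.trans htK)

theorem card_le_two_mul_volume (hK : IsUnionOfUnitIntervals K) {F : Finset ℝ}
    (hF : ∀ a ∈ F, a ∈ K ∧ a ∉ interior K) :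
    (F.card : ℝ≥0∞) ≤ 2 * volume K := by
  classical
  set L := F.filter fun a => Ioo a (a + 1) ⊆ K
  set R := F.filter fun a => ¬Ioo a (a + 1) ⊆ K
  have hLcard : (L.card : ℝ≥0∞) ≤ volume K :=
    card_le_volume_of_unit_Ioo_subset (fun a ha => (Finset.mem_filter.1 ha).2)
      fun a ha b hb hab => (hF b (Finset.mem_filter.1 hb).1).2
        (interior_maximal (Finset.mem_filter.1 ha).2 isOpen_Ioo hab)
  have hRsub : ∀ a ∈ R, Ioo (a - 1) a ⊆ K := fun a ha =>
    have ⟨haF, haK⟩ := Finset.mem_filter.1 ha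
    (hK.Ioo_subset_or_Ioo_subset (hF a haF).1 (hF a haF).2).resolve_left haK
  have hRcard : (R.card : ℝ≥0∞) ≤ volume K := by
    rw [← Finset.card_image_of_injective R (sub_left_injective (b := 1))]
    refine card_le_volume_of_unit_Ioo_subset ?_ ?_ <;> simp only [Finset.mem_image]
    · rintro _ ⟨a, ha, rfl⟩
      rw [sub_add_cancel]
      exact hRsub a ha
    · rintro _ ⟨a, ha, rfl⟩ _ ⟨b, hb, rfl⟩ ⟨hab, hba⟩
      exact (hF a (Finset.filter_subset _ _ ha)).2
        (interior_maximal (hRsub b hb) isOpen_Ioo ⟨by linarith, by linarith⟩)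
  calc (F.card : ℝ≥0∞) = L.card + R.card := by
        rw [← Nat.cast_add, Finset.card_filter_add_card_filter_not]
    _ ≤ volume K + volume K := add_le_add hLcard hRcard
    _ = 2 * volume K := (two_mul _).symm

end IsUnionOfUnitIntervals

local notation "ℝ²" => EuclideanSpace ℝ (Fin 2)

theorem EuclideanSpace.eq_vec_two (x : ℝ²) : x = !₂[x 0, x 1] := by
  ext j; fin_cases j <;> rfl

theorem isometry_vec_two_left (a : ℝ) : Isometry fun y : ℝ => (!₂[a, y] : ℝ²) :=
  Isometry.of_dist_eq fun y₁ y₂ => by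
    simp [EuclideanSpace.dist_eq, Fin.sum_univ_two, Real.sqrt_sq_eq_abs, Real.dist_eq]

theorem hausdorffMeasure_inter_coord_eq (s : Set ℝ²) (a : ℝ) :
    μH[1] (s ∩ {x | x 0 = a}) = volume {y | !₂[a, y] ∈ s} := by
  have hline : s ∩ {x | x 0 = a} = (fun y => !₂[a, y]) '' {y | !₂[a, y] ∈ s} := by
    change _ = _ '' ((fun y => !₂[a, y]) ⁻¹' s)
    rw [image_preimage_eq_inter_range]
    congr 1
    ext x
    refine ⟨fun hx => ⟨x 1, ?_⟩, ?_⟩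
    · change !₂[a, x 1] = x
      rw [← (hx : x 0 = a)]
      exact x.eq_vec_two.symm
    · rintro ⟨y, rfl⟩
      simp
  rw [hline, (isometry_vec_two_left a).hausdorffMeasure_image (Or.inl zero_le_one),
    hausdorffMeasure_real]

open Classical in
theorem hausdorffMeasure_inter_coord_mem {s : Set ℝ²} (hs : MeasurableSet s) (A : Finset ℝ) :
    μH[1] (s ∩ {x | x 0 ∈ A}) = ∫⁻ y, ((A.filter fun a => !₂[a, y] ∈ s).card : ℝ≥0∞) := by
  have hmeas : ∀ a : ℝ, MeasurableSet {y : ℝ | !₂[a, y] ∈ s} := fun a =>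
    (isometry_vec_two_left a).continuous.measurable hs
  have hdisj : (A : Set ℝ).PairwiseDisjoint fun a => s ∩ {x : ℝ² | x 0 = a} :=
    fun a _ b _ hab => Set.disjoint_left.2 fun x hxa hxb => hab (hxa.2.symm.trans hxb.2)
  calc μH[1] (s ∩ {x | x 0 ∈ A}) = μH[1] (⋃ a ∈ A, s ∩ {x | x 0 = a}) := by
        congr 1; ext x; simp
    _ = ∑ a ∈ A, volume {y | !₂[a, y] ∈ s} := by
        rw [measure_biUnion_finset hdisj fun a _ => hs.inter
          (measurableSet_eq_fun (PiLp.continuous_apply 2 _ 0).measurable measurable_const)]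
        exact Finset.sum_congr rfl fun a _ => hausdorffMeasure_inter_coord_eq s a
    _ = ∫⁻ y, ∑ a ∈ A, {y | !₂[a, y] ∈ s}.indicator 1 y := by
        rw [lintegral_finsetSum _ fun a _ => measurable_one.indicator (hmeas a)]
        exact Finset.sum_congr rfl fun a _ => (lintegral_indicator_one (hmeas a)).symm
    _ = ∫⁻ y, ((A.filter fun a => !₂[a, y] ∈ s).card : ℝ≥0∞) := by
        simp only [Finset.card_filter, Nat.cast_sum, Nat.cast_ite, Nat.cast_one, Nat.cast_zero,
          Set.indicator_apply, Pi.one_apply, mem_ofPred_eq]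

theorem volume_eq_lintegral_volume_slice {s : Set ℝ²} (hs : MeasurableSet s) :
    volume s = ∫⁻ y, volume {t | !₂[t, y] ∈ s} := by
  let e : ℝ × ℝ ≃ᵐ ℝ² :=
    (MeasurableEquiv.piFinTwo fun _ => ℝ).symm.trans (MeasurableEquiv.toLp 2 (Fin 2 → ℝ))
  have he : MeasurePreserving e volume volume :=
    ((volume_preserving_piFinTwo fun _ => ℝ).symm _).trans
      ((EuclideanSpace.volume_preserving_symm_measurableEquiv_toLp (Fin 2)).symm _)
  rw [← he.measure_preimage_equiv, Measure.volume_eq_prod,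
    Measure.prod_apply_symm (e.measurable hs)]
  rfl

theorem mem_interior_of_coord_mem_nhds {s : Set ℝ²} {p : ℝ²} {U V : Set ℝ} (hU : U ∈ 𝓝 (p 0))
    (hV : V ∈ 𝓝 (p 1)) (h : ∀ x : ℝ², x 0 ∈ U → x 1 ∈ V → x ∈ s) : p ∈ interior s :=
  mem_interior_iff_mem_nhds.2 <| Filter.mem_of_superset
    (Filter.inter_mem ((PiLp.continuous_apply 2 _ 0).continuousAt.preimage_mem_nhds hU)
      ((PiLp.continuous_apply 2 _ 1).continuousAt.preimage_mem_nhds hV))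
    fun x hx => h x hx.1 hx.2

theorem mem_translate_unitSquare {c x : ℝ²} :
    x ∈ (fun y => c + y) '' unitSquare ↔ ∀ j, x j ∈ Icc (c j) (c j + 1) := by
  rw [image_add_left]
  refine forall_congr' fun j => ?_
  simp only [mem_Icc, PiLp.add_apply, PiLp.neg_apply]
  constructor <;> rintro ⟨h₀, h₁⟩ <;> constructor <;> linarith

section SquareUnion

variable {ι : Type*} (c : ι → ℝ²)

def squareUnion : Set ℝ² :=
  ⋃ i, (fun x => c i + x) '' unitSquare

variable {c}

theorem mem_squareUnion {x : ℝ²} :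
    x ∈ squareUnion c ↔ ∃ i, x 0 ∈ Icc (c i 0) (c i 0 + 1) ∧ x 1 ∈ Icc (c i 1) (c i 1 + 1) := by
  simp only [squareUnion, mem_iUnion, mem_translate_unitSquare, Fin.forall_fin_two]

theorem vec_two_mem_squareUnion {t y : ℝ} :
    !₂[t, y] ∈ squareUnion c ↔ ∃ i, t ∈ Icc (c i 0) (c i 0 + 1) ∧ y ∈ Icc (c i 1) (c i 1 + 1) := by
  simp [mem_squareUnion]

variable (c)

theorem isClosed_squareUnion [Finite ι] : IsClosed (squareUnion c) := by
  have hsq : IsClosed unitSquare := by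
    rw [unitSquare, ofPred_forall]
    exact isClosed_iInter fun j => isClosed_Icc.preimage (PiLp.continuous_apply 2 _ j)
  exact isClosed_iUnion_of_finite fun i => (Homeomorph.addLeft (c i)).isClosedMap _ hsq

theorem isUnionOfUnitIntervals_slice (y : ℝ) :
    IsUnionOfUnitIntervals {t | !₂[t, y] ∈ squareUnion c} := by
  intro t ht
  obtain ⟨i, hti, hyi⟩ := vec_two_mem_squareUnion.1 ht
  exact ⟨c i 0, hti, fun t' ht' => vec_two_mem_squareUnion.2 ⟨i, ht', hyi⟩⟩

noncomputable def edgeCoords [Fintype ι] (j : Fin 2) : Finset ℝ :=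
  Finset.univ.biUnion fun i => {c i j, c i j + 1}

variable [Fintype ι]

theorem mem_edgeCoords {j : Fin 2} {r : ℝ} :
    r ∈ edgeCoords c j ↔ ∃ i, r = c i j ∨ r = c i j + 1 := by
  simp [edgeCoords]

theorem mem_Ioo_of_notMem_edgeCoords {j : Fin 2} {r : ℝ} (hr : r ∉ edgeCoords c j) {i : ι}
    (hri : r ∈ Icc (c i j) (c i j + 1)) : r ∈ Ioo (c i j) (c i j + 1) :=
  ⟨hri.1.lt_of_ne fun h => hr ((mem_edgeCoords c).2 ⟨i, .inl h.symm⟩),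
    hri.2.lt_of_ne fun h => hr ((mem_edgeCoords c).2 ⟨i, .inr h⟩)⟩

theorem frontier_squareUnion_subset :
    frontier (squareUnion c) ⊆ {x | x 0 ∈ edgeCoords c 0} ∪ {x | x 1 ∈ edgeCoords c 1} := by
  intro p hp
  by_contra hpe
  obtain ⟨hpe0, hpe1⟩ : p 0 ∉ edgeCoords c 0 ∧ p 1 ∉ edgeCoords c 1 := not_or.1 hpe
  obtain ⟨i, hi0, hi1⟩ := mem_squareUnion.1 ((isClosed_squareUnion c).frontier_subset hp)
  refine hp.2 (mem_interior_of_coord_mem_nhds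
    (isOpen_Ioo.mem_nhds (mem_Ioo_of_notMem_edgeCoords c hpe0 hi0))
    (isOpen_Ioo.mem_nhds (mem_Ioo_of_notMem_edgeCoords c hpe1 hi1))
    fun x hx0 hx1 => mem_squareUnion.2 ⟨i, Ioo_subset_Icc_self hx0, Ioo_subset_Icc_self hx1⟩)

theorem eventually_slice_subset {y : ℝ} (hy : y ∉ edgeCoords c 1) :
    ∀ᶠ y' in 𝓝 y, {t | !₂[t, y] ∈ squareUnion c} ⊆ {t | !₂[t, y'] ∈ squareUnion c} := by
  have hnear : ∀ i, ∀ᶠ y' in 𝓝 y,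
      y ∈ Icc (c i 1) (c i 1 + 1) → y' ∈ Icc (c i 1) (c i 1 + 1) := fun i => by
    by_cases hyi : y ∈ Icc (c i 1) (c i 1 + 1)
    · have := mem_Ioo_of_notMem_edgeCoords c hy hyi
      filter_upwards [isOpen_Ioo.mem_nhds this] with y' hy' using fun _ => Ioo_subset_Icc_self hy'
    · exact Filter.Eventually.of_forall fun _ h => absurd h hyi
  filter_upwards [Filter.eventually_all.2 hnear] with y' hy' t ht
  obtain ⟨i, hti, hyi⟩ := vec_two_mem_squareUnion.1 ht
  exact vec_two_mem_squareUnion.2 ⟨i, hti, hy' i hyi⟩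

theorem notMem_interior_slice {a y : ℝ} (hy : y ∉ edgeCoords c 1)
    (ha : !₂[a, y] ∉ interior (squareUnion c)) :
    a ∉ interior {t | !₂[t, y] ∈ squareUnion c} := fun hint =>
  ha <| mem_interior_of_coord_mem_nhds (V := {y' | _ ⊆ {t | !₂[t, y'] ∈ squareUnion c}})
    (mem_interior_iff_mem_nhds.1 hint) (eventually_slice_subset c hy)
    fun x hx0 hx1 => x.eq_vec_two ▸ hx1 hx0

open Classical in
theorem hausdorffMeasure_frontier_squareUnion_inter_coord_zero_le (A : Finset ℝ) :
    μH[1] (frontier (squareUnion c) ∩ {x | x 0 ∈ A}) ≤ 2 * volume (squareUnion c) := by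
  have hcount : ∀ᵐ y, ((A.filter fun a => !₂[a, y] ∈ frontier (squareUnion c)).card : ℝ≥0∞) ≤
      2 * volume {t | !₂[t, y] ∈ squareUnion c} := by
    filter_upwards [(edgeCoords c 1).finite_toSet.countable.ae_notMem volume] with y hy
    refine (isUnionOfUnitIntervals_slice c y).card_le_two_mul_volume fun a ha => ?_
    have hfr := (Finset.mem_filter.1 ha).2
    exact ⟨(isClosed_squareUnion c).frontier_subset hfr, notMem_interior_slice c hy hfr.2⟩
  calc μH[1] (frontier (squareUnion c) ∩ {x | x 0 ∈ A})
      = ∫⁻ y, ((A.filter fun a => !₂[a, y] ∈ frontier (squareUnion c)).card : ℝ≥0∞) :=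
        hausdorffMeasure_inter_coord_mem isClosed_frontier.measurableSet A
    _ ≤ ∫⁻ y, 2 * volume {t | !₂[t, y] ∈ squareUnion c} := lintegral_mono_ae hcount
    _ = 2 * volume (squareUnion c) := by
        rw [lintegral_const_mul' _ _ ENNReal.ofNat_ne_top,
          ← volume_eq_lintegral_volume_slice (isClosed_squareUnion c).measurableSet]

end SquareUnion

noncomputable def swapCoords : ℝ² ≃ₗᵢ[ℝ] ℝ² :=
  LinearIsometryEquiv.piLpCongrLeft 2 ℝ ℝ (Equiv.swap 0 1)

@[simp]
theorem swapCoords_apply_zero (x : ℝ²) : swapCoords x 0 = x 1 := by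
  simp [swapCoords]

@[simp]
theorem swapCoords_apply_one (x : ℝ²) : swapCoords x 1 = x 0 := by
  simp [swapCoords]

@[simp]
theorem swapCoords_symm : swapCoords.symm = swapCoords := by
  ext x j
  fin_cases j <;> simp [swapCoords]

theorem image_swapCoords_squareUnion {ι : Type*} (c : ι → ℝ²) :
    swapCoords '' squareUnion c = squareUnion (swapCoords ∘ c) := by
  ext x
  simp only [LinearIsometryEquiv.image_eq_preimage_symm, swapCoords_symm, mem_preimage,
    mem_squareUnion, swapCoords_apply_zero, swapCoords_apply_one, Function.comp_apply]
  exact exists_congr fun i => and_comm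

theorem hausdorffMeasure_frontier_squareUnion_inter_coord_one_le {ι : Type*} [Fintype ι]
    (c : ι → ℝ²) (A : Finset ℝ) :
    μH[1] (frontier (squareUnion c) ∩ {x | x 1 ∈ A}) ≤ 2 * volume (squareUnion c) := by
  have hswap : swapCoords '' (frontier (squareUnion c) ∩ {x | x 1 ∈ A}) =
      frontier (squareUnion (swapCoords ∘ c)) ∩ {x | x 0 ∈ A} := by
    rw [image_inter swapCoords.injective, ← image_swapCoords_squareUnion]
    congr 1
    · exact swapCoords.toHomeomorph.image_frontier _
    · ext x
      simp [LinearIsometryEquiv.image_eq_preimage_symm]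
  calc μH[1] (frontier (squareUnion c) ∩ {x | x 1 ∈ A})
      = μH[1] (frontier (squareUnion (swapCoords ∘ c)) ∩ {x | x 0 ∈ A}) := by
        rw [← hswap, swapCoords.isometry.hausdorffMeasure_image (Or.inl zero_le_one)]
    _ ≤ 2 * volume (squareUnion (swapCoords ∘ c)) :=
        hausdorffMeasure_frontier_squareUnion_inter_coord_zero_le _ A
    _ = 2 * volume (squareUnion c) := by
        rw [← image_swapCoords_squareUnion, LinearIsometryEquiv.image_eq_preimage_symm,
          swapCoords_symm, swapCoords.measurePreserving.measure_preimage
            (isClosed_squareUnion c).measurableSet.nullMeasurableSet]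

theorem perimeter_le_four_mul_area_of_union_axis_parallel_unit_squares_general
    (n : ℕ) (c : Fin n → EuclideanSpace ℝ (Fin 2))
    (H : Set (EuclideanSpace ℝ (Fin 2)))
    (hH : H = ⋃ i, (fun x => c i + x) '' unitSquare) :
    μH[1] (frontier H) ≤ 4 * volume H := by
  change H = squareUnion c at hH
  subst hH
  calc μH[1] (frontier (squareUnion c))
      ≤ μH[1] (frontier (squareUnion c) ∩ {x | x 0 ∈ edgeCoords c 0} ∪
          frontier (squareUnion c) ∩ {x | x 1 ∈ edgeCoords c 1}) := by
        rw [← inter_union_distrib_left]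
        exact measure_mono (subset_inter subset_rfl (frontier_squareUnion_subset c))
    _ ≤ 2 * volume (squareUnion c) + 2 * volume (squareUnion c) :=
        (measure_union_le _ _).trans (add_le_add
          (hausdorffMeasure_frontier_squareUnion_inter_coord_zero_le c _)
          (hausdorffMeasure_frontier_squareUnion_inter_coord_one_le c _))
    _ = 4 * volume (squareUnion c) := by ring

/-- The perimeter to area ratio of the union of finitely many axis-oriented unit
squares in the plane does not exceed 4:  `𝓗¹(frontier H) ≤ 4 · vol(H)`. -/
theorem perimeter_le_four_mul_area_of_union_axis_parallel_unit_squares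
    (n : ℕ) (hn : 1 ≤ n) (c : Fin n → EuclideanSpace ℝ (Fin 2))
    (H : Set (EuclideanSpace ℝ (Fin 2)))
    (hH : H = ⋃ i, (fun x => c i + x) '' unitSquare) :
    μH[1] (frontier H) ≤ 4 * volume H :=
  perimeter_le_four_mul_area_of_union_axis_parallel_unit_squares_general n c H hH
end

section
/- Let H be the union of finitely many closed disks of radius 1 in ℝ², i.e., H = ⋃_{i=1}^n closedBall(c_i, 1) with n ≥ 1. Then the perimeter-to-area ratio of H does not exceed 2, i.e., 𝓗¹(frontier H) ≤ 2 · vol(H). -/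
/-!
Every frontier point of `H` lies on the boundary circle of one of the disks and at distance at
least `1` from every centre. The part of the frontier on the circle around a centre `z` is
parametrised by its set of angles `T`, so its length is at most `|T|`, which is twice the area of
the open sector `radialCone z 1 (frontier H)` it subtends at `z`. These sectors lie in `H`, and
sectors at distinct centres are disjoint: a common point `v` would lie on a segment of length `1`
from a frontier point to the other centre, which forces both centres onto the same ray from `v`
at the same distance. Summing over the centres gives `𝓗¹(frontier H) ≤ 2 · vol(H)`.
-/

open MeasureTheory Set Metric
open scoped ENNReal

section RadialCone

variable {E : Type*} [NormedAddCommGroup E] [NormedSpace ℝ E]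

def radialCone (z : E) (R : ℝ) (A : Set E) : Set E :=
  {v | 0 < ‖v - z‖ ∧ ‖v - z‖ < R ∧ z + (R / ‖v - z‖) • (v - z) ∈ A}

variable {z y v : E} {R : ℝ} {A : Set E}

theorem radialCone_subset_ball : radialCone z R A ⊆ ball z R :=
  fun _ hv ↦ mem_ball_iff_norm.2 hv.2.1

theorem radialCone_mono {B : Set E} (hAB : A ⊆ B) : radialCone z R A ⊆ radialCone z R B :=
  fun _ ⟨hpos, hlt, hx⟩ ↦ ⟨hpos, hlt, hAB hx⟩

theorem norm_div_norm_smul_sub_self {w : E} (hw : 0 < ‖w‖) (hR : ‖w‖ ≤ R) :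
    ‖(R / ‖w‖) • w - w‖ = R - ‖w‖ := by
  have hc : 0 ≤ R / ‖w‖ - 1 := by rwa [sub_nonneg, le_div_iff₀ hw, one_mul]
  calc ‖(R / ‖w‖) • w - w‖ = ‖(R / ‖w‖ - 1) • w‖ := by rw [sub_smul, one_smul]
    _ = R - ‖w‖ := by
      rw [norm_smul, Real.norm_of_nonneg hc, sub_mul, div_mul_cancel₀ _ hw.ne', one_mul]

theorem norm_sub_le_of_mem_radialCone (hv : v ∈ radialCone z R A)
    (hy : ∀ x ∈ A, R ≤ dist x y) : ‖v - z‖ ≤ ‖v - y‖ := by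
  obtain ⟨hpos, hlt, hx⟩ := hv
  have hxv : ‖z + (R / ‖v - z‖) • (v - z) - v‖ = R - ‖v - z‖ := by
    rw [← norm_div_norm_smul_sub_self hpos hlt.le]; congr 1; abel
  have := (hy _ hx).trans (dist_triangle _ v y)
  rw [dist_eq_norm, dist_eq_norm, hxv] at this
  linarith

theorem disjoint_radialCone [StrictConvexSpace ℝ E] (hzy : z ≠ y)
    (hz : ∀ x ∈ A, R ≤ dist x z) (hy : ∀ x ∈ A, R ≤ dist x y) :
    Disjoint (radialCone z R A) (radialCone y R A) := by
  refine disjoint_left.2 fun v hvz hvy ↦ hzy ?_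
  have hnorm : ‖v - z‖ = ‖v - y‖ :=
    (norm_sub_le_of_mem_radialCone hvz hy).antisymm (norm_sub_le_of_mem_radialCone hvy hz)
  obtain ⟨hpos, hlt, hx⟩ := hvz
  have hxv : z + (R / ‖v - z‖) • (v - z) - v = (R / ‖v - z‖ - 1) • (v - z) := by
    rw [sub_smul, one_smul]; abel
  have hxv_norm : ‖z + (R / ‖v - z‖) • (v - z) - v‖ = R - ‖v - z‖ := by
    rw [← norm_div_norm_smul_sub_self hpos hlt.le]; congr 1; abel
  set x := z + (R / ‖v - z‖) • (v - z)
  -- `v` lies on a segment from `x ∈ A` to `y` of length exactly `R`, so `v - z` and `v - y` point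
  -- the same way
  have hxy : ‖(x - v) + (v - y)‖ = ‖x - v‖ + ‖v - y‖ := by
    have h1 := hy x hx
    have h2 := norm_add_le (x - v) (v - y)
    rw [dist_eq_norm, ← sub_add_sub_cancel x v y] at h1
    linarith
  have hc : 0 < R / ‖v - z‖ - 1 := by rwa [sub_pos, lt_div_iff₀ hpos, one_mul]
  have hray : SameRay ℝ (v - z) (v - y) := by
    have := sameRay_iff_norm_add.2 hxy
    rw [hxv] at this
    simpa [inv_smul_smul₀ hc.ne'] using this.pos_smul_left (inv_pos.2 hc)
  simpa using hray.eq_of_norm_eq hnorm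

theorem measurableSet_radialCone [MeasurableSpace E] [BorelSpace E] (hA : MeasurableSet A) :
    MeasurableSet (radialCone z R A) :=
  (measurableSet_lt measurable_const (g := fun v ↦ ‖v - z‖) (by fun_prop)).inter <|
    (measurableSet_lt (f := fun v ↦ ‖v - z‖) (by fun_prop) measurable_const).inter <|
      hA.preimage (f := fun v ↦ z + (R / ‖v - z‖) • (v - z)) (by fun_prop)

end RadialCone

section Plane

open Real

variable {z : ℂ} {R : ℝ} {A : Set ℂ}

theorem polarCoord_symm_add_mem_radialCone_iff {p : ℝ × ℝ} (hp : 0 < p.1) :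
    Complex.polarCoord.symm p + z ∈ radialCone z R A ↔ p ∈ Ioo 0 R ×ˢ (circleMap z R ⁻¹' A) := by
  obtain ⟨r, θ⟩ := p
  have hpolar : Complex.polarCoord.symm (r, θ) = circleMap 0 r θ := by
    simp [circleMap, Complex.exp_mul_I]
  have hproj : (R / r) • circleMap 0 r θ = circleMap 0 R θ := by
    simp only [circleMap, Complex.real_smul, zero_add, Complex.ofReal_div]
    rw [← mul_assoc, div_mul_cancel₀ _ (Complex.ofReal_ne_zero.2 hp.ne')]
  simp only [radialCone, mem_ofPred_eq, hpolar, add_sub_cancel_right, norm_circleMap_zero,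
    abs_of_pos hp, hproj, mem_prod, mem_Ioo, mem_preimage]
  rw [show z + circleMap 0 R θ = circleMap z R θ by simp [circleMap]]
  tauto

theorem volume_radialCone (hR : 0 ≤ R) (hA : MeasurableSet A) :
    volume (radialCone z R A) =
      ENNReal.ofReal (R ^ 2 / 2) * volume (circleMap z R ⁻¹' A ∩ Ioo (-π) π) := by
  have hArc : MeasurableSet (circleMap z R ⁻¹' A) := hA.preimage (measurable_circleMap z R)
  have hradial : ∫⁻ r in Ioo 0 R, ENNReal.ofReal r = ENNReal.ofReal (R ^ 2 / 2) := by
    rw [← ofReal_integral_eq_lintegral_ofReal, ← integral_Ioc_eq_integral_Ioo,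
      ← intervalIntegral.integral_of_le hR, integral_id]
    · simp
    · exact (continuous_id.integrableOn_Icc (a := 0) (b := R)).mono_set Ioo_subset_Icc_self
    · exact (ae_restrict_mem measurableSet_Ioo).mono fun r hr ↦ hr.1.le
  calc volume (radialCone z R A) = volume ((· + z) ⁻¹' radialCone z R A) :=
        (measure_preimage_add_right _ _ _).symm
    _ = ∫⁻ p in polarCoord.target, ENNReal.ofReal p.1 •
          ((· + z) ⁻¹' radialCone z R A).indicator 1 (Complex.polarCoord.symm p) := by
        rw [Complex.lintegral_comp_polarCoord_symm, lintegral_indicator_one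
          ((measurableSet_radialCone hA).preimage (measurable_add_const z))]
    _ = ∫⁻ p in polarCoord.target,
          (Ioo 0 R ×ˢ (circleMap z R ⁻¹' A)).indicator (fun p ↦ ENNReal.ofReal p.1) p := by
        refine setLIntegral_congr_fun polarCoord.open_target.measurableSet fun p hp ↦ ?_
        classical
        rw [indicator_apply, indicator_apply, mem_preimage,
          polarCoord_symm_add_mem_radialCone_iff hp.1]
        split_ifs <;> simp
    _ = ∫⁻ p in Ioo 0 R ×ˢ (circleMap z R ⁻¹' A ∩ Ioo (-π) π), ENNReal.ofReal p.1 := by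
        rw [lintegral_indicator (measurableSet_Ioo.prod hArc), Measure.restrict_restrict
          (measurableSet_Ioo.prod hArc), polarCoord_target, prod_inter_prod,
          inter_eq_left.2 Ioo_subset_Ioi_self]
    _ = ENNReal.ofReal (R ^ 2 / 2) * volume (circleMap z R ⁻¹' A ∩ Ioo (-π) π) := by
        rw [Measure.volume_eq_prod, setLIntegral_prod _ (by fun_prop)]
        simp_rw [setLIntegral_const]
        rw [lintegral_mul_const _ (by fun_prop), hradial]

theorem hausdorffMeasure_le_ofReal_mul_volume_circleMap_preimage (hR : 0 < R)
    (hA : A ⊆ sphere z R) :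
    μH[1] A ≤ ENNReal.ofReal R * volume (circleMap z R ⁻¹' A ∩ Ioc (-π) π) := by
  have hcover : A ⊆ circleMap z R '' (circleMap z R ⁻¹' A ∩ Ioc (-π) π) := by
    intro x hx
    have hxz : ‖x - z‖ = R := mem_sphere_iff_norm.1 (hA hx)
    have hx' : circleMap z R (Complex.arg (x - z)) = x := by
      rw [circleMap, ← hxz, Complex.norm_mul_exp_arg_mul_I, add_sub_cancel]
    exact ⟨_, ⟨by rwa [mem_preimage, hx'], Complex.arg_mem_Ioc _⟩, hx'⟩
  calc μH[1] A ≤ μH[1] (circleMap z R '' (circleMap z R ⁻¹' A ∩ Ioc (-π) π)) :=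
        measure_mono hcover
    _ ≤ (Real.nnabs R : ℝ≥0∞) ^ (1 : ℝ) * μH[1] (circleMap z R ⁻¹' A ∩ Ioc (-π) π) :=
        (lipschitzWith_circleMap z R).hausdorffMeasure_image_le zero_le_one _
    _ = ENNReal.ofReal R * volume (circleMap z R ⁻¹' A ∩ Ioc (-π) π) := by
        rw [hausdorffMeasure_real, ENNReal.rpow_one, Real.nnabs_of_nonneg hR.le]; rfl

theorem ofReal_mul_hausdorffMeasure_le_two_mul_volume_radialCone (hR : 0 < R)
    (hA : A ⊆ sphere z R) (hAm : MeasurableSet A) :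
    ENNReal.ofReal R * μH[1] A ≤ 2 * volume (radialCone z R A) := by
  have hIoc : volume (circleMap z R ⁻¹' A ∩ Ioc (-π) π) =
      volume (circleMap z R ⁻¹' A ∩ Ioo (-π) π) :=
    measure_congr ((ae_eq_refl _).inter Ioo_ae_eq_Ioc).symm
  calc ENNReal.ofReal R * μH[1] A
      ≤ ENNReal.ofReal R * (ENNReal.ofReal R * volume (circleMap z R ⁻¹' A ∩ Ioc (-π) π)) := by
        gcongr; exact hausdorffMeasure_le_ofReal_mul_volume_circleMap_preimage hR hA
    _ = 2 * (ENNReal.ofReal (R ^ 2 / 2) * volume (circleMap z R ⁻¹' A ∩ Ioo (-π) π)) := by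
        rw [hIoc, ← mul_assoc, ← mul_assoc, ← ENNReal.ofReal_mul hR.le, ← ENNReal.ofReal_ofNat 2,
          ← ENNReal.ofReal_mul zero_le_two]
        ring_nf
    _ = 2 * volume (radialCone z R A) := by rw [volume_radialCone hR.le hAm]

end Plane

theorem le_dist_of_mem_frontier {X : Type*} [PseudoMetricSpace X] {K : Set X} {x z : X} {R : ℝ}
    (hball : ball z R ⊆ K) (hx : x ∈ frontier K) : R ≤ dist x z := by
  by_contra! h
  exact hx.2 (interior_maximal hball isOpen_ball (mem_ball.2 h))

theorem ofReal_mul_hausdorffMeasure_frontier_biUnion_closedBall_le {s : Set ℂ} (hs : s.Finite)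
    {R : ℝ} (hR : 0 < R) :
    ENNReal.ofReal R * μH[1] (frontier (⋃ z ∈ s, closedBall z R)) ≤
      2 * volume (⋃ z ∈ s, closedBall z R) := by
  set K := ⋃ z ∈ s, closedBall z R
  have hball : ∀ z ∈ s, ball z R ⊆ K := fun z hz ↦
    ball_subset_closedBall.trans (subset_biUnion_of_mem (u := fun z ↦ closedBall z R) hz)
  have hfar : ∀ z ∈ s, ∀ x ∈ frontier K, R ≤ dist x z := fun z hz _ hx ↦
    le_dist_of_mem_frontier (hball z hz) hx
  have hcover : frontier K ⊆ ⋃ z ∈ s, frontier K ∩ sphere z R := by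
    intro x hx
    obtain ⟨z, hz, hxz⟩ := mem_iUnion₂.1
      ((hs.isClosed_biUnion fun _ _ ↦ isClosed_closedBall).frontier_subset hx)
    exact mem_iUnion₂.2 ⟨z, hz, hx, le_antisymm hxz (hfar z hz x hx)⟩
  have hdisj : s.PairwiseDisjoint fun z ↦ radialCone z R (frontier K) := fun z hz y hy hzy ↦
    disjoint_radialCone hzy (hfar z hz) (hfar y hy)
  have hmeas : ∀ z ∈ s, MeasurableSet (radialCone z R (frontier K)) := fun _ _ ↦
    measurableSet_radialCone isClosed_frontier.measurableSet
  calc ENNReal.ofReal R * μH[1] (frontier K)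
      ≤ ENNReal.ofReal R * ∑' z : s, μH[1] (frontier K ∩ sphere (z : ℂ) R) := by
        gcongr; exact (measure_mono hcover).trans (measure_biUnion_le _ hs.countable _)
    _ = ∑' z : s, ENNReal.ofReal R * μH[1] (frontier K ∩ sphere (z : ℂ) R) :=
        ENNReal.tsum_mul_left.symm
    _ ≤ ∑' z : s, 2 * volume (radialCone (z : ℂ) R (frontier K)) := by
        refine ENNReal.tsum_le_tsum fun z ↦ ?_
        refine (ofReal_mul_hausdorffMeasure_le_two_mul_volume_radialCone hR inter_subset_right
          (isClosed_frontier.inter isClosed_sphere).measurableSet).trans ?_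
        gcongr
        exact radialCone_mono inter_subset_left
    _ = 2 * volume (⋃ z ∈ s, radialCone z R (frontier K)) := by
        rw [ENNReal.tsum_mul_left, measure_biUnion hs.countable hdisj hmeas]
    _ ≤ 2 * volume K := by
        gcongr
        exact iUnion₂_subset fun z hz ↦ radialCone_subset_ball.trans (hball z hz)

theorem perimeter_le_two_mul_area_of_union_unit_disks_general
    (n : ℕ) (c : Fin n → EuclideanSpace ℝ (Fin 2))
    (H : Set (EuclideanSpace ℝ (Fin 2)))
    (hH : H = ⋃ i, Metric.closedBall (c i) 1) :
    μH[1] (frontier H) ≤ 2 * volume H := by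
  let e : ℂ ≃ₗᵢ[ℝ] EuclideanSpace ℝ (Fin 2) := Complex.orthonormalBasisOneI.repr
  have hK : e ⁻¹' H = ⋃ z ∈ range (e.symm ∘ c), closedBall z 1 := by
    rw [biUnion_range, hH, preimage_iUnion]
    exact iUnion_congr fun i ↦ e.toIsometryEquiv.preimage_closedBall (c i) 1
  have hperim : μH[1] (frontier (e ⁻¹' H)) = μH[1] (frontier H) :=
    (congrArg _ (e.toHomeomorph.preimage_frontier H)).symm.trans
      (e.toIsometryEquiv.hausdorffMeasure_preimage 1 _)
  have harea : volume (e ⁻¹' H) = volume H := by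
    refine e.measurePreserving.measure_preimage (MeasurableSet.nullMeasurableSet ?_)
    rw [hH]; exact (isClosed_iUnion_of_finite fun i ↦ isClosed_closedBall).measurableSet
  have := ofReal_mul_hausdorffMeasure_frontier_biUnion_closedBall_le (finite_range (e.symm ∘ c))
    one_pos
  rwa [← hK, hperim, harea, ENNReal.ofReal_one, one_mul] at this

/-- The perimeter to area ratio of the union of finitely many closed unit disks in
the plane does not exceed 2: `𝓗¹(frontier H) ≤ 2 · vol(H)`. -/
theorem perimeter_le_two_mul_area_of_union_unit_disks
    (n : ℕ) (hn : 1 ≤ n) (c : Fin n → EuclideanSpace ℝ (Fin 2))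
    (H : Set (EuclideanSpace ℝ (Fin 2)))
    (hH : H = ⋃ i, Metric.closedBall (c i) 1) :
    μH[1] (frontier H) ≤ 2 * volume H :=
  perimeter_le_two_mul_area_of_union_unit_disks_general n c H hH
end

section
/- There exist compact convex sets E₁ and E₂ in ℝ², each with nonempty interior, such that E₂ is congruent to E₁ (i.e., E₂ is the image of E₁ under an isometry of ℝ²), and the perimeter-to-area ratio of E₁ ∪ E₂ strictly exceeds the perimeter-to-area ratio of E₁; that is, 𝓗¹(frontier(E₁ ∪ E₂)) · vol(E₁) > 𝓗¹(frontier E₁) · vol(E₁ ∪ E₂). -/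
/-!
`E₁` is the right triangle with vertices `A = (0, 0)`, `B = (40, 0)`, `C = (40, 10)` and `E₂` its
image under the point reflection in `(32, 4)`. Since the reflection swaps `E₁` and `E₂`, the
boundary of `E₁ ∪ E₂` contains the disjoint sets `∂E₁ \ E₂` and its mirror image `∂E₂ \ E₁`.
On the three sides of `E₁` the parts inside `E₂` are the parameter ranges `[3/5, 4/5]`,
`[1/5, 4/5]` and `[3/5, 4/5]`, so `𝓗¹(∂(E₁ ∪ E₂)) ≥ 2 (32 + 4 + 4|AC|/5)`, while
`𝓗¹(∂E₁) ≤ 50 + |AC|`. Four trapezoids of area 72 cover `E₁ ∪ E₂`, and `vol E₁ = 200`; the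
claim becomes `(50 + h) · 288 < (72 + 8h/5) · 200`, i.e. `288 h < 320 h`, true for `h = |AC| > 0`.
-/

open MeasureTheory Set Filter Topology AffineMap

section Frontier

variable {X : Type*} [TopologicalSpace X]

theorem frontier_diff_subset_frontier_union {s t : Set X} (ht : IsClosed t) :
    frontier s \ t ⊆ frontier (s ∪ t) := by
  rintro p ⟨⟨hps, hpi⟩, hpt⟩
  refine ⟨closure_mono subset_union_left hps, fun hp => hpi ?_⟩
  have hsub : interior (s ∪ t) ∩ tᶜ ⊆ s := fun q ⟨hq, hqt⟩ =>
    (interior_subset hq).resolve_right hqt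
  exact interior_maximal hsub (isOpen_interior.inter ht.isOpen_compl) ⟨hp, hpt⟩

theorem measure_frontier_diff_add_le [MeasurableSpace X] [OpensMeasurableSpace X] (μ : Measure X)
    {s t : Set X} (hs : IsClosed s) (ht : IsClosed t) :
    μ (frontier s \ t) + μ (frontier t \ s) ≤ μ (frontier (s ∪ t)) := by
  have hdisj : Disjoint (frontier s \ t) (frontier t \ s) :=
    disjoint_left.2 fun p hp hp' => hp.2 (ht.frontier_subset hp'.1)
  rw [← measure_union hdisj (isClosed_frontier.measurableSet.diff hs.measurableSet)]
  refine measure_mono (union_subset (frontier_diff_subset_frontier_union ht) ?_)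
  rw [union_comm]
  exact frontier_diff_subset_frontier_union hs

end Frontier

theorem two_mul_hausdorffMeasure_frontier_diff_le {X : Type*} [EMetricSpace X]
    [MeasurableSpace X] [BorelSpace X] (d : ℝ) {s t : Set X} (hs : IsClosed s) (f : X ≃ᵢ X)
    (hst : f '' s = t) (hts : f '' t = s) :
    2 * μH[d] (frontier s \ t) ≤ μH[d] (frontier (s ∪ t)) := by
  have ht : IsClosed t := hst ▸ f.toHomeomorph.isClosed_image.2 hs
  have hswap : f '' (frontier s \ t) = frontier t \ s := by
    rw [image_sdiff f.injective, hts, ← hst]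
    exact congrArg (· \ s) (f.toHomeomorph.image_frontier s)
  calc 2 * μH[d] (frontier s \ t) = μH[d] (frontier s \ t) + μH[d] (frontier t \ s) := by
        rw [← hswap, f.hausdorffMeasure_image, two_mul]
    _ ≤ μH[d] (frontier (s ∪ t)) := measure_frontier_diff_add_le _ hs ht

theorem mem_frontier_of_forall_add_smul_notMem {E : Type*} [AddCommGroup E] [Module ℝ E]
    [TopologicalSpace E] [ContinuousAdd E] [ContinuousSMul ℝ E] {s : Set E} {p : E} (v : E)
    (hp : p ∈ s) (h : ∀ ε : ℝ, 0 < ε → p + ε • v ∉ s) : p ∈ frontier s := by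
  refine ⟨subset_closure hp, fun hint => ?_⟩
  have hlim : Tendsto (fun ε : ℝ => p + ε • v) (𝓝[>] 0) (𝓝 p) := by
    have hc : Continuous fun ε : ℝ => p + ε • v := by fun_prop
    simpa using (hc.tendsto 0).mono_left nhdsWithin_le_nhds
  obtain ⟨ε, hεs, hε⟩ :=
    ((hlim.eventually (mem_interior_iff_mem_nhds.1 hint)).and self_mem_nhdsWithin).exists
  exact h ε hε hεs

section Segment

variable {E : Type*} [NormedAddCommGroup E] [NormedSpace ℝ E]

theorem lineMap_image_Ioo_diff_Icc_subset_frontier_diff {s t : Set E} {x y : E} (v : E)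
    {a b : ℝ} (hs : ∀ τ ∈ Ioo (0 : ℝ) 1, lineMap x y τ ∈ s)
    (hv : ∀ τ ∈ Ioo (0 : ℝ) 1, ∀ ε : ℝ, 0 < ε → lineMap x y τ + ε • v ∉ s)
    (ht : ∀ τ ∈ Ioo (0 : ℝ) 1, lineMap x y τ ∈ t → τ ∈ Icc a b) :
    lineMap x y '' (Ioo 0 1 \ Icc a b) ⊆ frontier s \ t := by
  rintro _ ⟨τ, ⟨hτ, hτab⟩, rfl⟩
  exact ⟨mem_frontier_of_forall_add_smul_notMem v (hs τ hτ) (hv τ hτ),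
    fun h => hτab (ht τ hτ h)⟩

variable [MeasurableSpace E] [BorelSpace E]

theorem measurableSet_lineMap_image {x y : E} (hxy : x ≠ y) {s : Set ℝ}
    (hs : MeasurableSet s) : MeasurableSet (lineMap x y '' s) :=
  hs.image_of_continuousOn_injOn lineMap_continuous.continuousOn
    (lineMap_injective ℝ hxy).injOn

theorem le_hausdorffMeasure_lineMap_image_Ioo_diff_Icc (x y : E) {a b : ℝ} (hab : a ≤ b) :
    ENNReal.ofReal (dist x y * (1 - (b - a))) ≤
      μH[1] (lineMap x y '' (Ioo 0 1 \ Icc a b)) := by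
  rw [hausdorffMeasure_lineMap_image, hausdorffMeasure_real, ENNReal.smul_def, smul_eq_mul,
    ENNReal.ofReal_mul dist_nonneg, ← edist_dist, edist_nndist]
  gcongr
  refine le_trans (le_of_eq ?_) le_measure_sdiff
  rw [Real.volume_Ioo, Real.volume_Icc, sub_zero, ENNReal.ofReal_sub _ (sub_nonneg.2 hab),
    ENNReal.ofReal_one]

end Segment

local notation "ℝ²" => EuclideanSpace ℝ (Fin 2)

section RegionBetween

def closedRegionBetween (a b : ℝ) (f g : ℝ → ℝ) : Set ℝ² :=
  {p | p 0 ∈ Icc a b ∧ p 1 ∈ Icc (f (p 0)) (g (p 0))}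

theorem volume_closedRegionBetween {a b : ℝ} {f g : ℝ → ℝ} (hab : a ≤ b) (hf : Continuous f)
    (hg : Continuous g) (hfg : ∀ x ∈ Icc a b, f x ≤ g x) :
    volume (closedRegionBetween a b f g) = ENNReal.ofReal (∫ x in a..b, g x - f x) := by
  let e : ℝ² ≃ᵐ ℝ × ℝ :=
    (MeasurableEquiv.toLp 2 (Fin 2 → ℝ)).symm.trans MeasurableEquiv.finTwoArrow
  have he : MeasurePreserving e volume volume :=
    (EuclideanSpace.volume_preserving_symm_measurableEquiv_toLp _).trans
      (volume_preserving_finTwoArrow ℝ)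
  set S := {q : ℝ × ℝ | q.1 ∈ Icc a b ∧ q.2 ∈ Icc (f q.1) (g q.1)}
  have hS : MeasurableSet S :=
    measurableSet_region_between_cc hf.measurable hg.measurable measurableSet_Icc
  have hslice (x : ℝ) : volume (Prod.mk x ⁻¹' S) =
      (Icc a b).indicator (fun x => ENNReal.ofReal (g x - f x)) x := by
    by_cases hx : x ∈ Icc a b
    · have : Prod.mk x ⁻¹' S = Icc (f x) (g x) :=
        ext fun y => ⟨fun h => h.2, fun h => ⟨hx, h⟩⟩
      simp [this, hx]
    · have : Prod.mk x ⁻¹' S = ∅ := eq_empty_of_forall_notMem fun y hy => hx hy.1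
      simp [this, hx]
  have hnonneg : 0 ≤ᵐ[volume.restrict (Icc a b)] fun x => g x - f x :=
    (ae_restrict_iff' measurableSet_Icc).2 (.of_forall fun x hx => sub_nonneg.2 (hfg x hx))
  rw [show closedRegionBetween a b f g = e ⁻¹' S from rfl,
    he.measure_preimage hS.nullMeasurableSet, Measure.volume_eq_prod, Measure.prod_apply hS]
  simp_rw [hslice]
  rw [lintegral_indicator measurableSet_Icc,
    ← ofReal_integral_eq_lintegral_ofReal (f := fun x => g x - f x)
      (hg.sub hf).integrableOn_Icc hnonneg,
    integral_Icc_eq_integral_Ioc, ← intervalIntegral.integral_of_le hab]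

theorem volume_closedRegionBetween_affine {a b : ℝ} {f g : ℝ → ℝ} (α β γ δ : ℝ) (hab : a ≤ b)
    (hf : ∀ x, f x = α * x + β) (hg : ∀ x, g x = γ * x + δ) (hfg : ∀ x ∈ Icc a b, f x ≤ g x) :
    volume (closedRegionBetween a b f g) =
      ENNReal.ofReal ((γ - α) * (b ^ 2 - a ^ 2) / 2 + (δ - β) * (b - a)) := by
  have hf' : f = fun x => α * x + β := funext hf
  have hg' : g = fun x => γ * x + δ := funext hg
  subst hf' hg'
  rw [volume_closedRegionBetween hab (by fun_prop) (by fun_prop) hfg]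
  congr 1
  have : ∀ x : ℝ, γ * x + δ - (α * x + β) = (γ - α) * x + (δ - β) := fun x => by ring
  simp_rw [this]
  rw [intervalIntegral.integral_add (intervalIntegral.intervalIntegrable_id.const_mul _)
      intervalIntegrable_const, intervalIntegral.integral_const_mul, integral_id,
    intervalIntegral.integral_const, smul_eq_mul]
  ring

end RegionBetween

namespace Gyenes

def A : ℝ² := !₂[0, 0]
def B : ℝ² := !₂[40, 0]
def C : ℝ² := !₂[40, 10]

def triangle : Set ℝ² := {p | 0 ≤ p 1 ∧ p 0 ≤ 40 ∧ 4 * p 1 ≤ p 0}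

noncomputable def reflection : ℝ² ≃ᵢ ℝ² :=
  (AffineIsometryEquiv.pointReflection ℝ !₂[32, 4]).toIsometryEquiv

def reflectedTriangle : Set ℝ² := reflection '' triangle

@[simp] lemma reflection_apply_zero (p : ℝ²) : reflection p 0 = 64 - p 0 := by
  simp only [reflection, AffineIsometryEquiv.coe_toIsometryEquiv,
    AffineIsometryEquiv.pointReflection_apply, vsub_eq_sub, vadd_eq_add, PiLp.add_apply,
    PiLp.sub_apply, Matrix.cons_val_zero]
  ring

@[simp] lemma reflection_apply_one (p : ℝ²) : reflection p 1 = 8 - p 1 := by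
  simp only [reflection, AffineIsometryEquiv.coe_toIsometryEquiv,
    AffineIsometryEquiv.pointReflection_apply, vsub_eq_sub, vadd_eq_add, PiLp.add_apply,
    PiLp.sub_apply, Matrix.cons_val_one, Matrix.cons_val_fin_one]
  ring

lemma reflection_involutive : Function.Involutive reflection :=
  AffineIsometryEquiv.pointReflection_involutive (𝕜 := ℝ) _

lemma mem_reflectedTriangle {q : ℝ²} :
    q ∈ reflectedTriangle ↔ q 1 ≤ 8 ∧ 24 ≤ q 0 ∧ q 0 - 32 ≤ 4 * q 1 := by
  rw [reflectedTriangle, reflection_involutive.image_eq_preimage_symm]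
  simp only [mem_preimage, triangle, mem_ofPred_eq, reflection_apply_zero, reflection_apply_one]
  exact ⟨fun ⟨h₁, h₂, h₃⟩ => ⟨by linarith, by linarith, by linarith⟩,
    fun ⟨h₁, h₂, h₃⟩ => ⟨by linarith, by linarith, by linarith⟩⟩

lemma reflection_image_reflectedTriangle : reflection '' reflectedTriangle = triangle := by
  rw [reflectedTriangle, image_image, funext reflection_involutive, image_id']

lemma isClosed_triangle : IsClosed triangle := by
  simp only [triangle, ofPred_and]
  refine .inter (isClosed_le ?_ ?_) (.inter (isClosed_le ?_ ?_) (isClosed_le ?_ ?_)) <;> fun_prop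

lemma isCompact_triangle : IsCompact triangle := by
  refine Metric.isCompact_of_isClosed_isBounded isClosed_triangle
    (isBounded_iff_forall_norm_le.2 ⟨50, fun p ⟨h₁, h₂, h₃⟩ => ?_⟩)
  rw [EuclideanSpace.norm_eq, Fin.sum_univ_two, Real.sqrt_le_left (by norm_num),
    Real.norm_eq_abs, Real.norm_eq_abs, sq_abs, sq_abs]
  nlinarith

lemma convex_triangle : Convex ℝ triangle := by
  rintro x ⟨hx₁, hx₂, hx₃⟩ y ⟨hy₁, hy₂, hy₃⟩ a b ha hb hab
  refine ⟨?_, ?_, ?_⟩ <;> simp only [PiLp.add_apply, PiLp.smul_apply, smul_eq_mul] <;> nlinarith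

lemma setOf_lt_subset_interior_triangle :
    {p : ℝ² | 0 < p 1 ∧ p 0 < 40 ∧ 4 * p 1 < p 0} ⊆ interior triangle := by
  refine interior_maximal (fun p ⟨h₁, h₂, h₃⟩ => ⟨h₁.le, h₂.le, h₃.le⟩) ?_
  simp only [ofPred_and]
  refine .inter (isOpen_lt ?_ ?_) (.inter (isOpen_lt ?_ ?_) (isOpen_lt ?_ ?_)) <;> fun_prop

lemma interior_triangle_nonempty : (interior triangle).Nonempty :=
  ⟨!₂[39, 1], setOf_lt_subset_interior_triangle (by norm_num)⟩

lemma isCompact_reflectedTriangle : IsCompact reflectedTriangle :=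
  isCompact_triangle.image reflection.continuous

lemma convex_reflectedTriangle : Convex ℝ reflectedTriangle :=
  convex_triangle.affine_image
    (AffineIsometryEquiv.pointReflection ℝ (!₂[32, 4] : ℝ²)).toAffineEquiv.toAffineMap

lemma interior_reflectedTriangle_nonempty : (interior reflectedTriangle).Nonempty :=
  reflection.toHomeomorph.image_interior triangle ▸ interior_triangle_nonempty.image _

lemma frontier_triangle_subset :
    frontier triangle ⊆ segment ℝ A B ∪ segment ℝ B C ∪ segment ℝ A C := by
  intro p hp
  obtain ⟨h₁, h₂, h₃⟩ := isClosed_triangle.frontier_subset hp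
  have hstrict : ¬(0 < p 1 ∧ p 0 < 40 ∧ 4 * p 1 < p 0) := fun h =>
    hp.2 (setOf_lt_subset_interior_triangle h)
  simp only [segment_eq_image_lineMap, mem_union, mem_image, mem_Icc]
  rcases h₁.eq_or_lt with h₁ | h₁
  · refine .inl (.inl ⟨p 0 / 40, ⟨by linarith, by linarith⟩,
      PiLp.ext (Fin.forall_fin_two.2 ⟨?_, ?_⟩)⟩) <;>
      simp only [A, B, lineMap_apply_module, PiLp.add_apply, PiLp.smul_apply, smul_eq_mul,
        Matrix.cons_val_zero, Matrix.cons_val_one, Matrix.cons_val_fin_one] <;> linarith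
  rcases h₂.eq_or_lt with h₂ | h₂
  · refine .inl (.inr ⟨p 1 / 10, ⟨by linarith, by linarith⟩,
      PiLp.ext (Fin.forall_fin_two.2 ⟨?_, ?_⟩)⟩) <;>
      simp only [B, C, lineMap_apply_module, PiLp.add_apply, PiLp.smul_apply, smul_eq_mul,
        Matrix.cons_val_zero, Matrix.cons_val_one, Matrix.cons_val_fin_one] <;> linarith
  have h₃ : 4 * p 1 = p 0 := h₃.eq_or_lt.resolve_right fun h₃ => hstrict ⟨h₁, h₂, h₃⟩
  refine .inr ⟨p 1 / 10, ⟨by linarith, by linarith⟩,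
    PiLp.ext (Fin.forall_fin_two.2 ⟨?_, ?_⟩)⟩ <;>
    simp only [A, C, lineMap_apply_module, PiLp.add_apply, PiLp.smul_apply, smul_eq_mul,
      Matrix.cons_val_zero, Matrix.cons_val_one, Matrix.cons_val_fin_one] <;> linarith

lemma dist_A_B : dist A B = 40 := by simp [A, B, EuclideanSpace.dist_eq]
lemma dist_B_C : dist B C = 10 := by simp [B, C, EuclideanSpace.dist_eq]

lemma hausdorffMeasure_frontier_triangle_le :
    μH[1] (frontier triangle) ≤ ENNReal.ofReal (50 + dist A C) :=
  calc μH[1] (frontier triangle)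
      ≤ μH[1] (segment ℝ A B) + μH[1] (segment ℝ B C) + μH[1] (segment ℝ A C) :=
        (measure_mono frontier_triangle_subset).trans
          ((measure_union_le _ _).trans (add_le_add_left (measure_union_le _ _) _))
    _ = ENNReal.ofReal (50 + dist A C) := by
        simp only [hausdorffMeasure_segment, edist_dist, dist_A_B, dist_B_C]
        rw [← ENNReal.ofReal_add (by norm_num) (by norm_num),
          ← ENNReal.ofReal_add (by norm_num) dist_nonneg]
        norm_num

lemma lineMap_images_subset_frontier_triangle_diff :
    lineMap A B '' (Ioo (0 : ℝ) 1 \ Icc (3 / 5) (4 / 5)) ⊆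
        (frontier triangle \ reflectedTriangle) ∩ {p | p 1 = 0 ∧ p 0 < 40} ∧
      lineMap B C '' (Ioo (0 : ℝ) 1 \ Icc (1 / 5) (4 / 5)) ⊆
        (frontier triangle \ reflectedTriangle) ∩ {p | p 0 = 40} ∧
      lineMap A C '' (Ioo (0 : ℝ) 1 \ Icc (3 / 5) (4 / 5)) ⊆
        (frontier triangle \ reflectedTriangle) ∩ {p | 0 < p 1 ∧ p 0 < 40} := by
  refine ⟨subset_inter (lineMap_image_Ioo_diff_Icc_subset_frontier_diff !₂[0, -1]
      (fun τ _ => ?_) (fun τ _ ε _ h => ?_) (fun τ _ h => ?_)) (image_subset_iff.2 fun τ _ => ?_),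
    subset_inter (lineMap_image_Ioo_diff_Icc_subset_frontier_diff !₂[1, 0]
      (fun τ _ => ?_) (fun τ _ ε _ h => ?_) (fun τ _ h => ?_)) (image_subset_iff.2 fun τ _ => ?_),
    subset_inter (lineMap_image_Ioo_diff_Icc_subset_frontier_diff !₂[-1, 1]
      (fun τ _ => ?_) (fun τ _ ε _ h => ?_) (fun τ _ h => ?_)) (image_subset_iff.2 fun τ _ => ?_)⟩
  all_goals
    simp only [triangle, mem_reflectedTriangle, mem_ofPred_eq, mem_preimage, Set.mem_sdiff,
      mem_Ioo, mem_Icc, A, B, C, lineMap_apply_module, PiLp.add_apply, PiLp.smul_apply,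
      smul_eq_mul, Matrix.cons_val_zero, Matrix.cons_val_one, Matrix.cons_val_fin_one] at *
    try casesm* _ ∧ _
    and_intros <;> linarith

lemma le_hausdorffMeasure_frontier_triangle_diff :
    ENNReal.ofReal (36 + 4 / 5 * dist A C) ≤ μH[1] (frontier triangle \ reflectedTriangle) := by
  set S₁ := lineMap A B '' (Ioo (0 : ℝ) 1 \ Icc (3 / 5) (4 / 5))
  set S₂ := lineMap B C '' (Ioo (0 : ℝ) 1 \ Icc (1 / 5) (4 / 5))
  set S₃ := lineMap A C '' (Ioo (0 : ℝ) 1 \ Icc (3 / 5) (4 / 5))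
  have hmeas {x y : ℝ²} (hxy : x ≠ y) (a b : ℝ) :
      MeasurableSet (lineMap x y '' (Ioo (0 : ℝ) 1 \ Icc a b)) :=
    measurableSet_lineMap_image hxy (measurableSet_Ioo.diff measurableSet_Icc)
  obtain ⟨hS₁, hS₂, hS₃⟩ := lineMap_images_subset_frontier_triangle_diff
  have h₁₂ : Disjoint S₁ S₂ := Disjoint.mono (hS₁.trans inter_subset_right)
    (hS₂.trans inter_subset_right) (disjoint_left.2 fun p ⟨_, h⟩ h' => h.ne h')
  have h₁₂₃ : Disjoint (S₁ ∪ S₂) S₃ := disjoint_union_left.2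
    ⟨Disjoint.mono (hS₁.trans inter_subset_right) (hS₃.trans inter_subset_right)
      (disjoint_left.2 fun p ⟨h, _⟩ ⟨h', _⟩ => h'.ne' h),
    Disjoint.mono (hS₂.trans inter_subset_right) (hS₃.trans inter_subset_right)
      (disjoint_left.2 fun p h ⟨_, h'⟩ => h'.ne h)⟩
  calc ENNReal.ofReal (36 + 4 / 5 * dist A C)
      = ENNReal.ofReal (dist A B * (1 - (4 / 5 - 3 / 5))) +
          ENNReal.ofReal (dist B C * (1 - (4 / 5 - 1 / 5))) +
          ENNReal.ofReal (dist A C * (1 - (4 / 5 - 3 / 5))) := by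
        rw [dist_A_B, dist_B_C, ← ENNReal.ofReal_add (by norm_num) (by norm_num),
          ← ENNReal.ofReal_add (by norm_num) (mul_nonneg dist_nonneg (by norm_num))]
        ring_nf
    _ ≤ μH[1] S₁ + μH[1] S₂ + μH[1] S₃ := by
        gcongr <;> exact le_hausdorffMeasure_lineMap_image_Ioo_diff_Icc _ _ (by norm_num)
    _ = μH[1] (S₁ ∪ S₂ ∪ S₃) := by
        rw [measure_union h₁₂₃ (hmeas (by simp [A, C]) _ _),
          measure_union h₁₂ (hmeas (by simp [B, C]) _ _)]
    _ ≤ μH[1] (frontier triangle \ reflectedTriangle) :=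
        measure_mono (union_subset (union_subset (hS₁.trans inter_subset_left)
          (hS₂.trans inter_subset_left)) (hS₃.trans inter_subset_left))

lemma le_hausdorffMeasure_frontier_union :
    ENNReal.ofReal (72 + 8 / 5 * dist A C) ≤
      μH[1] (frontier (triangle ∪ reflectedTriangle)) :=
  calc ENNReal.ofReal (72 + 8 / 5 * dist A C)
      = 2 * ENNReal.ofReal (36 + 4 / 5 * dist A C) := by
        rw [show 72 + 8 / 5 * dist A C = 2 * (36 + 4 / 5 * dist A C) by ring,
          ENNReal.ofReal_mul (by norm_num), ENNReal.ofReal_ofNat]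
    _ ≤ 2 * μH[1] (frontier triangle \ reflectedTriangle) := by
        gcongr
        exact le_hausdorffMeasure_frontier_triangle_diff
    _ ≤ μH[1] (frontier (triangle ∪ reflectedTriangle)) :=
        two_mul_hausdorffMeasure_frontier_diff_le 1 isClosed_triangle reflection rfl
          reflection_image_reflectedTriangle

lemma triangle_eq_closedRegionBetween :
    triangle = closedRegionBetween 0 40 (fun _ => 0) (· / 4) := by
  ext p
  simp only [triangle, closedRegionBetween, mem_ofPred_eq, mem_Icc]
  constructor
  · rintro ⟨h₁, h₂, h₃⟩
    exact ⟨⟨by linarith, h₂⟩, h₁, by linarith⟩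
  · rintro ⟨⟨_, h₂⟩, h₁, h₃⟩
    exact ⟨h₁, h₂, by linarith⟩

lemma volume_triangle : volume triangle = ENNReal.ofReal 200 := by
  rw [triangle_eq_closedRegionBetween,
    volume_closedRegionBetween_affine 0 0 (1 / 4) 0 (by norm_num) (fun _ => by ring)
      (fun _ => by ring) fun x hx => by simp only [mem_Icc] at hx ⊢; linarith]
  norm_num

lemma triangle_union_reflectedTriangle_subset :
    triangle ∪ reflectedTriangle ⊆
      closedRegionBetween 0 24 (fun _ => 0) (· / 4) ∪
        closedRegionBetween 24 32 (fun x => (x - 32) / 4) (fun _ => 8) ∪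
        closedRegionBetween 32 40 (fun _ => 0) (· / 4) ∪
        closedRegionBetween 40 64 (fun x => (x - 32) / 4) (fun _ => 8) := by
  rintro p (⟨h₁, h₂, h₃⟩ | h)
  all_goals simp only [closedRegionBetween, mem_union, mem_ofPred_eq, mem_Icc]
  · rcases le_total (p 0) 24 with h₄ | h₄
    · exact .inl (.inl (.inl ⟨⟨by linarith, h₄⟩, h₁, by linarith⟩))
    rcases le_total (p 0) 32 with h₅ | h₅
    · exact .inl (.inl (.inr ⟨⟨h₄, h₅⟩, by linarith, by linarith⟩))
    · exact .inl (.inr ⟨⟨h₅, h₂⟩, h₁, by linarith⟩)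
  · obtain ⟨h₁, h₂, h₃⟩ := mem_reflectedTriangle.1 h
    rcases le_total (p 0) 32 with h₄ | h₄
    · exact .inl (.inl (.inr ⟨⟨h₂, h₄⟩, by linarith, h₁⟩))
    rcases le_total (p 0) 40 with h₅ | h₅
    · exact .inl (.inr ⟨⟨h₄, h₅⟩, by linarith, by linarith⟩)
    · exact .inr ⟨⟨h₅, by linarith⟩, by linarith, h₁⟩

lemma volume_triangle_union_reflectedTriangle_le :
    volume (triangle ∪ reflectedTriangle) ≤ ENNReal.ofReal 288 := by
  refine (measure_mono triangle_union_reflectedTriangle_subset).trans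
    ((measure_union_le _ _).trans (add_le_add_left ((measure_union_le _ _).trans
      (add_le_add_left (measure_union_le _ _) _)) _)) |>.trans (le_of_eq ?_)
  rw [volume_closedRegionBetween_affine 0 0 (1 / 4) 0 (by norm_num) (fun _ => by ring)
      (fun _ => by ring) fun x hx => by simp only [mem_Icc] at hx ⊢; linarith,
    volume_closedRegionBetween_affine (1 / 4) (-8) 0 8 (by norm_num) (fun _ => by ring)
      (fun _ => by ring) fun x hx => by simp only [mem_Icc] at hx ⊢; linarith,
    volume_closedRegionBetween_affine 0 0 (1 / 4) 0 (by norm_num) (fun _ => by ring)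
      (fun _ => by ring) fun x hx => by simp only [mem_Icc] at hx ⊢; linarith,
    volume_closedRegionBetween_affine (1 / 4) (-8) 0 8 (by norm_num) (fun _ => by ring)
      (fun _ => by ring) fun x hx => by simp only [mem_Icc] at hx ⊢; linarith]
  rw [← ENNReal.ofReal_add (by norm_num) (by norm_num),
    ← ENNReal.ofReal_add (by norm_num) (by norm_num),
    ← ENNReal.ofReal_add (by norm_num) (by norm_num)]
  norm_num

end Gyenes

open Gyenes

/-- Gyenes's example: there exist congruent compact convex sets `E₁ ≅ E₂` in the
plane, each with nonempty interior, such that the perimeter to area ratio of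
`E₁ ∪ E₂` strictly exceeds the perimeter to area ratio of `E₁`. -/
theorem exists_congruent_convex_sets_with_union_ratio_gt :
    ∃ E₁ E₂ : Set (EuclideanSpace ℝ (Fin 2)),
      IsCompact E₁ ∧ Convex ℝ E₁ ∧ (interior E₁).Nonempty ∧
      IsCompact E₂ ∧ Convex ℝ E₂ ∧ (interior E₂).Nonempty ∧
      (∃ f : EuclideanSpace ℝ (Fin 2) ≃ᵢ EuclideanSpace ℝ (Fin 2), E₂ = f '' E₁) ∧
      μH[1] (frontier E₁) * volume (E₁ ∪ E₂) <
        μH[1] (frontier (E₁ ∪ E₂)) * volume E₁ := by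
  refine ⟨triangle, reflectedTriangle, isCompact_triangle, convex_triangle,
    interior_triangle_nonempty, isCompact_reflectedTriangle, convex_reflectedTriangle,
    interior_reflectedTriangle_nonempty, ⟨reflection, rfl⟩, ?_⟩
  have hAC : 0 < dist A C := dist_pos.2 (by simp [A, C])
  calc μH[1] (frontier triangle) * volume (triangle ∪ reflectedTriangle)
      ≤ ENNReal.ofReal (50 + dist A C) * ENNReal.ofReal 288 :=
        mul_le_mul' hausdorffMeasure_frontier_triangle_le
          volume_triangle_union_reflectedTriangle_le
    _ < ENNReal.ofReal (72 + 8 / 5 * dist A C) * ENNReal.ofReal 200 := by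
        rw [← ENNReal.ofReal_mul (by positivity), ← ENNReal.ofReal_mul (by positivity),
          ENNReal.ofReal_lt_ofReal_iff (by positivity)]
        linarith
    _ ≤ μH[1] (frontier (triangle ∪ reflectedTriangle)) * volume triangle := by
        rw [volume_triangle]
        exact mul_le_mul_left le_hausdorffMeasure_frontier_union _
end
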